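/- arXiv:2010.09289 — 2 statements merged into one kernel-verified Lean document; each statement's English description precedes it below -/
import Mathlib

section
/- Let μ > 1 and f : ℝ → ℝ be differentiable with f = 0 on ℝ₋, f > 0 on (0,∞), and μ f(ξ) ≤ ξ f'(ξ) for all ξ ≥ 0. Then for every ξ₀ ≥ 0 the function ξ ↦ f(ξ)/(ξ + ξ₀) is non-decreasing on (0, ∞) and tends to +∞ as ξ → +∞. -/
open Real Set Filter

theorem stmt1 (μ : ℝ) (hμ : 1 < μ) (f f' : ℝ → ℝ)
    (hderiv : ∀ ξ : ℝ, HasDerivAt f (f' ξ) ξ)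
    (hfneg : ∀ ξ ≤ (0:ℝ), f ξ = 0)
    (hfpos : ∀ ξ > (0:ℝ), 0 < f ξ)
    (hineq : ∀ ξ ≥ (0:ℝ), μ * f ξ ≤ ξ * f' ξ)
    (ξ₀ : ℝ) (hξ₀ : 0 ≤ ξ₀) :
    MonotoneOn (fun ξ : ℝ => f ξ / (ξ + ξ₀)) (Set.Ioi 0) ∧
      Tendsto (fun ξ : ℝ => f ξ / (ξ + ξ₀)) atTop atTop := by
  -- derivative facts
  have hf'pos : ∀ x > (0:ℝ), 0 < f' x := by
    intro x hx
    have h1 := hineq x hx.le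
    have h2 := hfpos x hx
    nlinarith
  have hgderiv : ∀ x > (0:ℝ), HasDerivAt (fun ξ : ℝ => f ξ / (ξ + ξ₀))
      ((f' x * (x + ξ₀) - f x * 1) / (x + ξ₀) ^ 2) x := by
    intro x hx
    have hne : x + ξ₀ ≠ 0 := by positivity
    exact (hderiv x).div ((hasDerivAt_id x).add_const ξ₀) hne
  have hmono : MonotoneOn (fun ξ : ℝ => f ξ / (ξ + ξ₀)) (Set.Ioi 0) := by
    apply monotoneOn_of_deriv_nonneg (convex_Ioi 0)
    · intro x hx
      exact ((hgderiv x hx).continuousAt).continuousWithinAt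
    · intro x hx
      rw [interior_Ioi] at hx
      exact (hgderiv x hx).differentiableAt.differentiableWithinAt
    · intro x hx
      rw [interior_Ioi] at hx
      rw [(hgderiv x hx).deriv]
      have h1 := hineq x hx.le
      have h2 := hfpos x hx
      have h3 := hf'pos x hx
      have h4 : 0 ≤ ξ₀ * f' x := mul_nonneg hξ₀ h3.le
      apply div_nonneg _ (sq_nonneg _)
      nlinarith
  refine ⟨hmono, ?_⟩
  -- F = f ξ / ξ^μ is monotone on Ici 1
  have hFderiv : ∀ x > (0:ℝ), HasDerivAt (fun ξ : ℝ => f ξ / ξ ^ μ)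
      ((f' x * x ^ μ - f x * (μ * x ^ (μ - 1))) / (x ^ μ) ^ 2) x := by
    intro x hx
    have hne : x ^ μ ≠ 0 := by positivity
    exact (hderiv x).div (Real.hasDerivAt_rpow_const (Or.inl hx.ne')) hne
  have hFmono : MonotoneOn (fun ξ : ℝ => f ξ / ξ ^ μ) (Set.Ici 1) := by
    apply monotoneOn_of_deriv_nonneg (convex_Ici 1)
    · intro x hx
      have hx0 : (0:ℝ) < x := lt_of_lt_of_le one_pos hx
      exact ((hFderiv x hx0).continuousAt).continuousWithinAt
    · intro x hx
      rw [interior_Ici] at hx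
      have hx0 : (0:ℝ) < x := lt_trans one_pos hx
      exact (hFderiv x hx0).differentiableAt.differentiableWithinAt
    · intro x hx
      rw [interior_Ici] at hx
      have hx0 : (0:ℝ) < x := lt_trans one_pos hx
      rw [(hFderiv x hx0).deriv]
      apply div_nonneg _ (sq_nonneg _)
      have hsplit : x ^ μ = x ^ (μ - 1) * x := by
        rw [← Real.rpow_add_one hx0.ne' (μ - 1)]; ring_nf
      have h1 := hineq x hx0.le
      have hp : (0:ℝ) ≤ x ^ (μ - 1) := Real.rpow_nonneg hx0.le _
      calc (0:ℝ) ≤ x ^ (μ - 1) * (x * f' x - μ * f x) := mul_nonneg hp (by linarith)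
        _ = f' x * x ^ μ - f x * (μ * x ^ (μ - 1)) := by rw [hsplit]; ring
  have hf1 : 0 < f 1 := hfpos 1 one_pos
  -- lower bound f ξ ≥ f 1 * ξ^μ for ξ ≥ 1
  have hlb : ∀ x ≥ (1:ℝ), f 1 * x ^ μ ≤ f x := by
    intro x hx
    have hx0 : (0:ℝ) < x := lt_of_lt_of_le one_pos hx
    have := hFmono (le_refl (1:ℝ)) (mem_Ici.mpr hx) hx
    simp only [Real.one_rpow, div_one] at this
    have hxp : (0:ℝ) < x ^ μ := Real.rpow_pos_of_pos hx0 μ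
    calc f 1 * x ^ μ ≤ (f x / x ^ μ) * x ^ μ := by
          apply mul_le_mul_of_nonneg_right this hxp.le
      _ = f x := by field_simp
  -- tendsto
  have hbound : Tendsto (fun x : ℝ => f 1 / 2 * x ^ (μ - 1)) atTop atTop :=
    (tendsto_rpow_atTop (by linarith)).const_mul_atTop (by positivity)
  apply tendsto_atTop_mono' atTop _ hbound
  filter_upwards [eventually_ge_atTop (max 1 ξ₀)] with x hx
  have hx1 : (1:ℝ) ≤ x := le_trans (le_max_left _ _) hx
  have hxξ : ξ₀ ≤ x := le_trans (le_max_right _ _) hx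
  have hx0 : (0:ℝ) < x := lt_of_lt_of_le one_pos hx1
  have hden : 0 < x + ξ₀ := by linarith
  calc f 1 / 2 * x ^ (μ - 1) = f 1 * x ^ μ / (2 * x) := by
        rw [Real.rpow_sub_one hx0.ne']; ring
    _ ≤ f 1 * x ^ μ / (x + ξ₀) := by
        apply div_le_div_of_nonneg_left (by positivity) hden (by linarith)
    _ ≤ f x / (x + ξ₀) := by
        apply div_le_div_of_nonneg_right (hlb x hx1) hden.le
end

section
/- Let s ∈ (0,1) and let Ω ⊂ ℝ² be a measurable set of finite Lebesgue measure. Then ∬_{Ω×Ω} |x − y|^(−2s) dx dy ≤ (π^s/(1−s)) · L²(Ω)^(2−s). -/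
/-!
For fixed `x`, the superlevel set `{y | t < |x - y|^(-2s)}` is a disc of area `π t^(-1/s)`, so by
the layer-cake formula the inner integral over `Ω` is at most
`∫₀^∞ min (|Ω|, π t^(-1/s)) dt = π^s |Ω|^(1-s) / (1 - s)`;
integrating this bound over `x ∈ Ω` gives the claim.
-/

open Real MeasureTheory Set Metric

lemma lintegral_ofReal_le_measure_mul_add_lintegral_Ioi {α : Type*} [MeasurableSpace α]
    (μ : Measure α) {f : α → ℝ} (f_nn : 0 ≤ᵐ[μ] f) (f_mble : AEMeasurable f μ) {t₀ : ℝ}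
    (ht₀ : 0 ≤ t₀) :
    ∫⁻ a, ENNReal.ofReal (f a) ∂μ ≤
      μ univ * ENNReal.ofReal t₀ + ∫⁻ t in Ioi t₀, μ {a | t < f a} := by
  rw [lintegral_eq_lintegral_meas_lt μ f_nn f_mble, ← Ioc_union_Ioi_eq_Ioi ht₀,
    lintegral_union measurableSet_Ioi Ioc_disjoint_Ioi_same]
  gcongr
  calc ∫⁻ t in Ioc 0 t₀, μ {a | t < f a} ≤ ∫⁻ _ in Ioc 0 t₀, μ univ :=
        lintegral_mono fun _ ↦ measure_mono (subset_univ _)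
    _ = μ univ * ENNReal.ofReal t₀ := by simp [Real.volume_Ioc]

lemma lintegral_Ioi_rpow_neg {p c : ℝ} (hp : 1 < p) (hc : 0 < c) :
    ∫⁻ t in Ioi c, ENNReal.ofReal (t ^ (-p)) = ENNReal.ofReal (c ^ (1 - p) / (p - 1)) := by
  have hexp : -p < -1 := by linarith
  rw [← ofReal_integral_eq_lintegral_ofReal (integrableOn_Ioi_rpow_of_lt hexp hc)
    ((ae_restrict_mem measurableSet_Ioi).mono fun t ht ↦ rpow_nonneg (hc.trans ht).le _),
    integral_Ioi_rpow_of_lt hexp hc, neg_div, ← div_neg]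
  ring_nf

lemma setOf_lt_dist_rpow_neg_subset_ball {X : Type*} [PseudoMetricSpace X] (x : X) {p t : ℝ}
    (hp : 0 < p) (ht : 0 < t) :
    {y | t < dist x y ^ (-p)} ⊆ ball x (t ^ (-p)⁻¹) := by
  intro y (hy : t < dist x y ^ (-p))
  have hd : 0 < dist x y := by
    refine dist_nonneg.lt_of_ne fun h ↦ ?_
    rw [← h, zero_rpow (neg_ne_zero.2 hp.ne')] at hy
    exact ht.not_gt hy
  exact mem_ball'.2 ((lt_rpow_inv_iff_of_neg hd ht (neg_neg_of_pos hp)).2 hy)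

lemma volume_setOf_lt_dist_rpow_le (x : EuclideanSpace ℝ (Fin 2)) {s t : ℝ} (hs : 0 < s)
    (ht : 0 < t) :
    volume {y | t < dist x y ^ (-(2 * s))} ≤ ENNReal.ofReal (π * t ^ (-s⁻¹)) := by
  calc volume {y | t < dist x y ^ (-(2 * s))}
      ≤ volume (ball x (t ^ (-(2 * s))⁻¹)) :=
        measure_mono (setOf_lt_dist_rpow_neg_subset_ball x (by positivity) ht)
    _ = ENNReal.ofReal (π * t ^ (-s⁻¹)) := by
      rw [EuclideanSpace.volume_ball_fin_two, ← ENNReal.ofReal_pow (by positivity),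
        ← ENNReal.ofReal_mul (by positivity), mul_comm, ← rpow_natCast, ← rpow_mul ht.le]
      congr 3
      field_simp
      norm_num

lemma mul_rpow_add_mul_rpow_div_eq {a M s : ℝ} (ha : 0 < a) (hM : 0 < M) (hs0 : 0 < s)
    (hs1 : s < 1) :
    M * (a / M) ^ s + a * (((a / M) ^ s) ^ (1 - s⁻¹) / (s⁻¹ - 1)) =
      a ^ s * M ^ (1 - s) / (1 - s) := by
  rw [← rpow_mul (by positivity), mul_sub, mul_one, mul_inv_cancel₀ hs0.ne',
    div_rpow ha.le hM.le, div_rpow ha.le hM.le, rpow_sub ha, rpow_sub hM, rpow_sub hM,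
    rpow_one, rpow_one]
  have : 1 - s ≠ 0 := by linarith
  have : 0 < M ^ s := by positivity
  have : 0 < a ^ s := by positivity
  field_simp
  ring

lemma lintegral_dist_rpow_neg_le {s : ℝ} (hs0 : 0 < s) (hs1 : s < 1)
    {Ω : Set (EuclideanSpace ℝ (Fin 2))} (hfin : volume Ω < ⊤) (x : EuclideanSpace ℝ (Fin 2)) :
    ∫⁻ y in Ω, ENNReal.ofReal (dist x y ^ (-(2 * s))) ≤
      ENNReal.ofReal (π ^ s / (1 - s)) * volume Ω ^ (1 - s) := by
  rcases eq_or_ne (volume Ω) 0 with hΩ0 | hΩ0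
  · simp [Measure.restrict_eq_zero.2 hΩ0]
  set M := (volume Ω).toReal
  have hM : 0 < M := ENNReal.toReal_pos hΩ0 hfin.ne
  -- the threshold where the trivial bound `M` meets the bound `π t^(-1/s)` on superlevel sets
  set t₀ := (π / M) ^ s
  have ht₀ : 0 < t₀ := by positivity
  calc ∫⁻ y in Ω, ENNReal.ofReal (dist x y ^ (-(2 * s)))
      ≤ volume.restrict Ω univ * ENNReal.ofReal t₀ +
          ∫⁻ t in Ioi t₀, volume.restrict Ω {y | t < dist x y ^ (-(2 * s))} :=
        lintegral_ofReal_le_measure_mul_add_lintegral_Ioi _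
          (ae_of_all _ fun _ ↦ rpow_nonneg dist_nonneg _) (by fun_prop) ht₀.le
    _ ≤ ENNReal.ofReal M * ENNReal.ofReal t₀ +
          ∫⁻ t in Ioi t₀, ENNReal.ofReal π * ENNReal.ofReal (t ^ (-s⁻¹)) := by
        rw [Measure.restrict_apply_univ, ENNReal.ofReal_toReal hfin.ne]
        gcongr 1
        refine setLIntegral_mono' measurableSet_Ioi fun t ht ↦ ?_
        rw [← ENNReal.ofReal_mul pi_pos.le]
        exact (Measure.restrict_le_self _).trans
          (volume_setOf_lt_dist_rpow_le x hs0 (ht₀.trans ht))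
    _ = ENNReal.ofReal (M * t₀ + π * (t₀ ^ (1 - s⁻¹) / (s⁻¹ - 1))) := by
        have hs : 1 < s⁻¹ := one_lt_inv₀ hs0 |>.2 hs1
        rw [lintegral_const_mul' _ _ ENNReal.ofReal_ne_top, lintegral_Ioi_rpow_neg hs ht₀,
          ← ENNReal.ofReal_mul hM.le, ← ENNReal.ofReal_mul pi_pos.le,
          ← ENNReal.ofReal_add (by positivity) (by have := sub_pos.2 hs; positivity)]
    _ = ENNReal.ofReal (π ^ s / (1 - s)) * volume Ω ^ (1 - s) := by
        rw [mul_rpow_add_mul_rpow_div_eq pi_pos hM hs0 hs1, mul_div_right_comm,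
          ENNReal.ofReal_mul (by have := sub_pos.2 hs1; positivity),
          ← ENNReal.ofReal_rpow_of_pos hM, ENNReal.ofReal_toReal hfin.ne]

theorem stmt9_general (s : ℝ) (hs0 : 0 < s) (hs1 : s < 1)
    (Ω : Set (EuclideanSpace ℝ (Fin 2)))
    (hfin : volume Ω < ⊤) :
    ∫⁻ x in Ω, ∫⁻ y in Ω, ENNReal.ofReal (dist x y ^ (-(2 * s))) ≤
      ENNReal.ofReal (Real.pi ^ s / (1 - s)) * (volume Ω) ^ (2 - s) := by
  calc ∫⁻ x in Ω, ∫⁻ y in Ω, ENNReal.ofReal (dist x y ^ (-(2 * s)))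
      ≤ ∫⁻ _ in Ω, ENNReal.ofReal (π ^ s / (1 - s)) * volume Ω ^ (1 - s) :=
        lintegral_mono fun x ↦ lintegral_dist_rpow_neg_le hs0 hs1 hfin x
    _ = ENNReal.ofReal (π ^ s / (1 - s)) * volume Ω ^ (2 - s) := by
        rw [setLIntegral_const, mul_assoc, show 2 - s = (1 - s) + 1 by ring,
          ENNReal.rpow_add_of_nonneg _ _ (by linarith) zero_le_one, ENNReal.rpow_one]

theorem stmt9 (s : ℝ) (hs0 : 0 < s) (hs1 : s < 1)
    (Ω : Set (EuclideanSpace ℝ (Fin 2))) (hΩ : MeasurableSet Ω)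
    (hfin : volume Ω < ⊤) :
    ∫⁻ x in Ω, ∫⁻ y in Ω, ENNReal.ofReal (dist x y ^ (-(2 * s))) ≤
      ENNReal.ofReal (Real.pi ^ s / (1 - s)) * (volume Ω) ^ (2 - s) :=
  stmt9_general s hs0 hs1 Ω hfin
end
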